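/- Let x be in the Jacobson radical of a Noetherian ring R and M a finitely generated R-module. Then x is a nonzerodivisor on M if and only if for every t ≥ 1 the canonical map M/x^t M → colim_n M/x^n M (with transition maps given by multiplication by x^{t-s}) is injective; moreover this holds if and only if the map is injective for some t ≥ 1. -/

import Mathlib

/-!
The class of `m` in `M/x^tM` dies in the colimit iff `x^k m ∈ x^(t+k) M` for some `k`.
If `x` is regular, cancelling `x^k` gives `m ∈ x^t M`. Conversely, injectivity at some `t ≥ 1`
shows that the `x`-power torsion submodule `N` satisfies `N ⊆ x^t N`; since `N` is finitely
generated and `x^t` lies in the Jacobson radical, Nakayama's lemma gives `N = 0`.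
-/

/-- The transition maps `M/x^sM → M/x^tM`, for `s ≤ t`, of the direct system `{M/x^nM}`;
they are induced by multiplication by `x^{t-s}`. -/
noncomputable def powerQuotientMap {R : Type*} [CommRing R] (M : Type*) [AddCommGroup M]
    [Module R M] (x : R) (s t : ℕ) (h : s ≤ t) :
    (M ⧸ (Ideal.span {x ^ s} • (⊤ : Submodule R M))) →ₗ[R]
      M ⧸ (Ideal.span {x ^ t} • (⊤ : Submodule R M)) :=
  Submodule.mapQ _ _ (LinearMap.lsmul R M (x ^ (t - s))) (by
    refine Submodule.smul_le.mpr ?_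
    rintro r hr m -
    obtain ⟨c, rfl⟩ := Ideal.mem_span_singleton'.mp hr
    refine Submodule.mem_comap.mpr ?_
    have hxx : (x ^ (t - s)) • ((c * x ^ s) • m) = (c * x ^ t) • m := by
      rw [smul_smul, mul_comm (x ^ (t - s)), mul_assoc, ← pow_add, Nat.add_sub_cancel' h]
    show (x ^ (t - s)) • ((c * x ^ s) • m) ∈ _
    rw [hxx]
    exact Submodule.smul_mem_smul (Ideal.mem_span_singleton'.mpr ⟨c, rfl⟩) trivial)

section PowerQuotient

variable {R : Type*} [CommRing R] {M : Type*} [AddCommGroup M] [Module R M]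

theorem mem_span_singleton_smul_top_iff {a : R} {m : M} :
    m ∈ Ideal.span {a} • (⊤ : Submodule R M) ↔ ∃ n, a • n = m := by
  simp [Submodule.ideal_span_singleton_smul, Submodule.mem_smul_pointwise_iff_exists]

theorem powerQuotientMap_mk (x : R) {s t : ℕ} (h : s ≤ t) (m : M) :
    powerQuotientMap M x s t h (Submodule.Quotient.mk m) =
      Submodule.Quotient.mk (x ^ (t - s) • m) :=
  Submodule.mapQ_apply _ _ _ m

instance powerQuotientMap_directedSystem (x : R) :
    DirectedSystem (fun n => M ⧸ (Ideal.span {x ^ n} • (⊤ : Submodule R M)))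
      (fun s t h => powerQuotientMap M x s t h) where
  map_self i y := by
    obtain ⟨m, rfl⟩ := Submodule.Quotient.mk_surjective _ y
    rw [powerQuotientMap_mk, Nat.sub_self, pow_zero, one_smul]
  map_map k j i hij hjk y := by
    obtain ⟨m, rfl⟩ := Submodule.Quotient.mk_surjective _ y
    rw [powerQuotientMap_mk, powerQuotientMap_mk, powerQuotientMap_mk, smul_smul, ← pow_add,
      show k - j + (j - i) = k - i by omega]

theorem directLimit_of_powerQuotient_mk_eq_zero_iff (x : R) (t : ℕ) (m : M) :
    Module.DirectLimit.of R ℕ (fun n => M ⧸ (Ideal.span {x ^ n} • (⊤ : Submodule R M)))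
        (powerQuotientMap M x) t (Submodule.Quotient.mk m) = 0 ↔
      ∃ k n, x ^ (t + k) • n = x ^ k • m := by
  constructor
  · intro h
    obtain ⟨j, htj, hj⟩ := Module.DirectLimit.of.zero_exact h
    rw [powerQuotientMap_mk, Submodule.Quotient.mk_eq_zero,
      mem_span_singleton_smul_top_iff] at hj
    exact ⟨j - t, by rwa [Nat.add_sub_cancel' htj]⟩
  · rintro ⟨k, n, hkn⟩
    rw [← Module.DirectLimit.of_f (hij := Nat.le_add_right t k), powerQuotientMap_mk,
      Nat.add_sub_cancel_left, ← hkn, (Submodule.Quotient.mk_eq_zero _).mpr, map_zero]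
    exact mem_span_singleton_smul_top_iff.mpr ⟨n, rfl⟩

theorem IsSMulRegular.injective_directLimit_of_powerQuotient {x : R}
    (hx : IsSMulRegular M x) (t : ℕ) :
    Function.Injective
      (Module.DirectLimit.of R ℕ (fun n => M ⧸ (Ideal.span {x ^ n} • (⊤ : Submodule R M)))
        (powerQuotientMap M x) t) := by
  rw [injective_iff_map_eq_zero]
  intro y hy
  obtain ⟨m, rfl⟩ := Submodule.Quotient.mk_surjective _ y
  obtain ⟨k, n, hkn⟩ := (directLimit_of_powerQuotient_mk_eq_zero_iff x t m).mp hy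
  rw [Submodule.Quotient.mk_eq_zero, mem_span_singleton_smul_top_iff]
  refine ⟨n, hx.pow k ?_⟩
  change x ^ k • x ^ t • n = x ^ k • m
  rw [smul_smul, ← pow_add, add_comm, hkn]

theorem torsion'_powers_le_smul_of_injective_directLimit_of_powerQuotient {x : R} {t : ℕ}
    (h : Function.Injective
      (Module.DirectLimit.of R ℕ (fun n => M ⧸ (Ideal.span {x ^ n} • (⊤ : Submodule R M)))
        (powerQuotientMap M x) t)) :
    Submodule.torsion' R M (Submonoid.powers x) ≤
      Ideal.span {x ^ t} • Submodule.torsion' R M (Submonoid.powers x) := by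
  rintro m ⟨⟨_, k, rfl⟩, hk⟩
  have hm : m ∈ Ideal.span {x ^ t} • (⊤ : Submodule R M) := by
    rw [← Submodule.Quotient.mk_eq_zero]
    refine h ?_
    rw [map_zero, directLimit_of_powerQuotient_mk_eq_zero_iff]
    exact ⟨k, 0, by rw [smul_zero]; exact hk.symm⟩
  obtain ⟨n, rfl⟩ := mem_span_singleton_smul_top_iff.mp hm
  change x ^ k • x ^ t • n = 0 at hk
  refine Submodule.smul_mem_smul (Ideal.mem_span_singleton_self _)
    ⟨⟨x ^ (k + t), k + t, rfl⟩, ?_⟩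
  change x ^ (k + t) • n = 0
  rwa [pow_add, mul_smul]

theorem isSMulRegular_of_injective_directLimit_of_powerQuotient [IsNoetherian R M] {x : R}
    (hx : x ∈ Ideal.jacobson (⊥ : Ideal R)) {t : ℕ} (ht : 1 ≤ t)
    (h : Function.Injective
      (Module.DirectLimit.of R ℕ (fun n => M ⧸ (Ideal.span {x ^ n} • (⊤ : Submodule R M)))
        (powerQuotientMap M x) t)) :
    IsSMulRegular M x := by
  have htors : Submodule.torsion' R M (Submonoid.powers x) = ⊥ :=
    Submodule.eq_bot_of_le_smul_of_le_jacobson_bot _ _ (IsNoetherian.noetherian _)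
      (torsion'_powers_le_smul_of_injective_directLimit_of_powerQuotient h)
      ((Ideal.span_singleton_le_iff_mem _).mpr (Ideal.pow_mem_of_mem _ hx t ht))
  rw [isSMulRegular_iff_torsionBy_eq_bot, eq_bot_iff, ← htors]
  exact fun m hm => ⟨⟨x, Submonoid.mem_powers x⟩, hm⟩

end PowerQuotient

/-- Let `x` be in the Jacobson radical of a Noetherian ring `R` and `M` a
finitely generated `R`-module. Then `x` is a nonzerodivisor on `M` iff for every `t ≥ 1` the
canonical map `M/x^tM → colim_n M/x^nM` is injective, iff this map is injective for some
`t ≥ 1`. -/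
theorem isSMulRegular_iff_canonical_map_injective {R : Type*} [CommRing R] [IsNoetherianRing R]
    {M : Type*} [AddCommGroup M] [Module R M] [Module.Finite R M]
    (x : R) (hx : x ∈ Ideal.jacobson (⊥ : Ideal R)) :
    (IsSMulRegular M x ↔ ∀ t : ℕ, 1 ≤ t → Function.Injective
        (Module.DirectLimit.of R ℕ (fun n => M ⧸ (Ideal.span {x ^ n} • (⊤ : Submodule R M)))
          (powerQuotientMap M x) t)) ∧
    (IsSMulRegular M x ↔ ∃ t : ℕ, 1 ≤ t ∧ Function.Injective
        (Module.DirectLimit.of R ℕ (fun n => M ⧸ (Ideal.span {x ^ n} • (⊤ : Submodule R M)))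
          (powerQuotientMap M x) t)) := by
  have regular_iff (t : ℕ) (ht : 1 ≤ t) : IsSMulRegular M x ↔ Function.Injective
      (Module.DirectLimit.of R ℕ (fun n => M ⧸ (Ideal.span {x ^ n} • (⊤ : Submodule R M)))
        (powerQuotientMap M x) t) :=
    ⟨fun h => h.injective_directLimit_of_powerQuotient t,
      isSMulRegular_of_injective_directLimit_of_powerQuotient hx ht⟩
  exact ⟨⟨fun h t ht => (regular_iff t ht).mp h,
      fun h => (regular_iff 1 le_rfl).mpr (h 1 le_rfl)⟩,
    ⟨fun h => ⟨1, le_rfl, (regular_iff 1 le_rfl).mp h⟩,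
      fun ⟨t, ht, h⟩ => (regular_iff t ht).mpr h⟩⟩
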